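/- Let P be a symmetric positive semidefinite n×n real matrix, H an m×n real matrix, and R a symmetric positive definite m×m real matrix. Define the Kalman gain K = P Hᵀ (H P Hᵀ + R)⁻¹. Then I - K H = (I + P Hᵀ R⁻¹ H)⁻¹. -/

import Mathlib

open Matrix

theorem kalman_gain_inverse_form {n m : ℕ}
    (P : Matrix (Fin n) (Fin n) ℝ) (H : Matrix (Fin m) (Fin n) ℝ)
    (R : Matrix (Fin m) (Fin m) ℝ)
    (hP : P.PosSemidef) (hR : R.PosDef) :
    (1 : Matrix (Fin n) (Fin n) ℝ) - (P * Hᵀ * (H * P * Hᵀ + R)⁻¹) * H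
      = (1 + P * Hᵀ * R⁻¹ * H)⁻¹ := by
  set S : Matrix (Fin m) (Fin m) ℝ := H * P * Hᵀ + R with hSdef
  have hHPHT : (H * P * Hᵀ).PosSemidef := by
    have := hP.mul_mul_conjTranspose_same H
    simpa [Matrix.conjTranspose_eq_transpose_of_trivial, Matrix.mul_assoc] using this
  have hS : S.PosDef := Matrix.PosDef.posSemidef_add hHPHT hR
  have hSinv : S⁻¹ * S = 1 := Matrix.nonsing_inv_mul _ (Matrix.isUnit_iff_isUnit_det _ |>.1 hS.isUnit)
  have hRinv : R * R⁻¹ = 1 := Matrix.mul_nonsing_inv _ (Matrix.isUnit_iff_isUnit_det _ |>.1 hR.isUnit)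
  have h1 : S⁻¹ * (H * P * Hᵀ) * R⁻¹ = R⁻¹ - S⁻¹ := by
    have h2 : S⁻¹ * (H * P * Hᵀ) = 1 - S⁻¹ * R := by
      have : H * P * Hᵀ = S - R := by rw [hSdef]; abel
      rw [this, Matrix.mul_sub, hSinv]
    rw [h2, Matrix.sub_mul, one_mul, Matrix.mul_assoc, hRinv, mul_one]
  have hAHB : (P * Hᵀ * S⁻¹ * H) * (P * Hᵀ * R⁻¹ * H)
      = P * Hᵀ * R⁻¹ * H - P * Hᵀ * S⁻¹ * H := by
    calc (P * Hᵀ * S⁻¹ * H) * (P * Hᵀ * R⁻¹ * H)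
        = P * Hᵀ * (S⁻¹ * (H * P * Hᵀ) * R⁻¹) * H := by
          simp only [Matrix.mul_assoc]
      _ = P * Hᵀ * R⁻¹ * H - P * Hᵀ * S⁻¹ * H := by
          rw [h1, Matrix.mul_sub, Matrix.sub_mul]
  have main : ((1 : Matrix (Fin n) (Fin n) ℝ) - P * Hᵀ * S⁻¹ * H) * (1 + P * Hᵀ * R⁻¹ * H) = 1 := by
    rw [Matrix.sub_mul, one_mul, Matrix.mul_add, Matrix.mul_one, hAHB]
    abel
  exact (Matrix.inv_eq_left_inv main).symm
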